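/- Massart's lemma: if A ⊆ ℝ^n is a finite set with max_{a∈A} ‖a‖₂ ≤ r, then E_σ[max_{a∈A} (1/n) Σ_{i=1}^n σ_i a_i] ≤ r√(2 log|A|)/n, where σ_1, ..., σ_n are i.i.d. Rademacher variables. -/

import Mathlib

/-!
For `l > 0`, Jensen's inequality and the bound of a maximum of exponentials by their sum give
`exp (l 𝔼 max_a ⟪σ, a⟫) ≤ ∑_a 𝔼 exp (l ⟪σ, a⟫)`, and a Rademacher sum is sub-Gaussian:
`𝔼 exp (l ⟪σ, a⟫) = ∏ i, cosh (l aᵢ) ≤ exp (l² ‖a‖² / 2)`. Hence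
`𝔼 max_a ⟪σ, a⟫ ≤ (log |A| + l² r² / 2) / l` for every `l > 0`, and the infimum over `l` of the
right-hand side is `r √(2 log |A|)`.
-/

open Finset Real
open scoped BigOperators

lemma ConvexOn.map_expect_le {ι : Type*} {D : Set ℝ} {g : ℝ → ℝ} (hg : ConvexOn ℝ D g)
    {s : Finset ι} (hs : s.Nonempty) {f : ι → ℝ} (hf : ∀ i ∈ s, f i ∈ D) :
    g (𝔼 i ∈ s, f i) ≤ 𝔼 i ∈ s, g (f i) := by
  have hcard : (0 : ℝ) < #s := by exact_mod_cast hs.card_pos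
  have := hg.map_sum_le (w := fun _ => (#s : ℝ)⁻¹) (fun _ _ => by positivity)
    (by simp [hcard.ne']) hf
  simpa only [expect_eq_sum_div_card, smul_eq_mul, inv_mul_eq_div, sum_div] using this

lemma exp_mul_sup'_le_sum_exp {α : Type*} {A : Finset α} (hA : A.Nonempty) (f : α → ℝ) (l : ℝ) :
    exp (l * A.sup' hA f) ≤ ∑ a ∈ A, exp (l * f a) := by
  obtain ⟨a, ha, hmax⟩ := exists_mem_eq_sup' hA f
  rw [hmax]
  exact single_le_sum (f := fun a => exp (l * f a)) (fun _ _ => (exp_pos _).le) ha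

lemma expect_sup'_le_log_card_add_div {Ω α : Type*} [Fintype Ω] [Nonempty Ω] {A : Finset α}
    (hA : A.Nonempty) (S : Ω → α → ℝ) {l c : ℝ} (hl : 0 < l)
    (hmgf : ∀ a ∈ A, 𝔼 ω, exp (l * S ω a) ≤ exp c) :
    𝔼 ω, A.sup' hA (S ω) ≤ (log #A + c) / l := by
  have hexp : exp (l * 𝔼 ω, A.sup' hA (S ω)) ≤ #A * exp c :=
    calc exp (l * 𝔼 ω, A.sup' hA (S ω))
        = exp (𝔼 ω, l * A.sup' hA (S ω)) := by rw [mul_expect]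
      _ ≤ 𝔼 ω, exp (l * A.sup' hA (S ω)) :=
          convexOn_exp.map_expect_le univ_nonempty fun _ _ => Set.mem_univ _
      _ ≤ 𝔼 ω, ∑ a ∈ A, exp (l * S ω a) :=
          expect_le_expect fun ω _ => exp_mul_sup'_le_sum_exp hA (S ω) l
      _ = ∑ a ∈ A, 𝔼 ω, exp (l * S ω a) := expect_sum_comm _ _ _
      _ ≤ ∑ _a ∈ A, exp c := sum_le_sum hmgf
      _ = #A * exp c := by rw [sum_const, nsmul_eq_mul]
  have hlog := log_le_log (exp_pos _) hexp
  rw [log_exp, log_mul (by exact_mod_cast hA.card_pos.ne') (exp_ne_zero c), log_exp] at hlog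
  rw [le_div_iff₀ hl]
  linarith

lemma sum_exp_mul_sum_sign_mul {ι : Type*} [Fintype ι] [DecidableEq ι] (l : ℝ) (a : ι → ℝ) :
    ∑ σ : ι → Bool, exp (l * ∑ i, (if σ i then 1 else -1) * a i) = ∏ i, 2 * cosh (l * a i) := by
  simp_rw [mul_sum, exp_sum]
  rw [← Fintype.prod_sum fun i (b : Bool) => exp (l * ((if b then 1 else -1) * a i))]
  refine prod_congr rfl fun i _ => ?_
  simp only [Fintype.sum_bool, ↓reduceIte, Bool.false_eq_true, one_mul, neg_one_mul, mul_neg,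
    cosh_eq]
  ring

lemma expect_exp_mul_sum_sign_mul_le {ι : Type*} [Fintype ι] [DecidableEq ι] (l : ℝ)
    (a : EuclideanSpace ℝ ι) :
    𝔼 σ : ι → Bool, exp (l * ∑ i, (if σ i then 1 else -1) * a i) ≤ exp (l ^ 2 * ‖a‖ ^ 2 / 2) := by
  rw [Fintype.expect_eq_sum_div_card, sum_exp_mul_sum_sign_mul, prod_mul_distrib, prod_const,
    Fintype.card_fun, Fintype.card_bool, Nat.cast_pow, Nat.cast_ofNat, card_univ,
    mul_div_cancel_left₀ _ (by positivity), EuclideanSpace.real_norm_sq_eq, mul_sum, sum_div,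
    exp_sum]
  refine prod_le_prod (fun _ _ => (cosh_pos _).le) fun i _ => ?_
  rw [show l ^ 2 * a i ^ 2 / 2 = (l * a i) ^ 2 / 2 by ring]
  exact cosh_le_exp_half_sq _

lemma le_two_sqrt_mul_of_forall_le_add_sq_mul_div {T L c : ℝ} (hL : 0 ≤ L) (hc : 0 ≤ c)
    (h : ∀ l > 0, T ≤ (L + l ^ 2 * c) / l) : T ≤ 2 * √(L * c) := by
  -- The minimiser `l = √(L / c)` may not exist, so minimise for `L + ε`, `c + ε` and let `ε → 0`.
  have hε : ∀ ε > 0, T ≤ 2 * √((L + ε) * (c + ε)) := by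
    intro ε hε
    have hL' : 0 < L + ε := by linarith
    have hc' : 0 < c + ε := by linarith
    set l := √((L + ε) / (c + ε))
    have hl : 0 < l := sqrt_pos.2 (by positivity)
    calc T ≤ (L + l ^ 2 * c) / l := h l hl
      _ ≤ (L + ε + l ^ 2 * (c + ε)) / l := by gcongr <;> nlinarith [sq_nonneg l]
      _ = 2 * √((L + ε) * (c + ε)) := by
        rw [sq_sqrt (by positivity), div_mul_cancel₀ _ hc'.ne', div_eq_iff hl.ne', mul_assoc,
          ← sqrt_mul (by positivity), show (L + ε) * (c + ε) * ((L + ε) / (c + ε)) = (L + ε) ^ 2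
            by field_simp, sqrt_sq hL'.le]
        ring
  have hlim : Filter.Tendsto (fun ε => 2 * √((L + ε) * (c + ε))) (nhdsWithin 0 (Set.Ioi 0))
      (nhds (2 * √(L * c))) := by
    have : Continuous fun ε : ℝ => 2 * √((L + ε) * (c + ε)) := by fun_prop
    simpa using (this.tendsto 0).mono_left nhdsWithin_le_nhds
  exact ge_of_tendsto hlim (eventually_nhdsWithin_of_forall hε)

theorem massart_lemma_general {n : ℕ}
    (A : Finset (EuclideanSpace ℝ (Fin n))) (hA : A.Nonempty)
    (r : ℝ) (hr : ∀ a ∈ A, ‖a‖ ≤ r) :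
    (1 / 2 ^ n : ℝ) * ∑ σ : Fin n → Bool,
        A.sup' hA (fun a => (1 / n : ℝ) * ∑ i, (if σ i then (1 : ℝ) else -1) * a i)
      ≤ r * Real.sqrt (2 * Real.log A.card) / n := by
  obtain ⟨a₀, ha₀⟩ := id hA
  have hr₀ : 0 ≤ r := (norm_nonneg a₀).trans (hr a₀ ha₀)
  have hmax : 𝔼 σ : Fin n → Bool, A.sup' hA (fun a => ∑ i, (if σ i then 1 else -1) * a i)
      ≤ r * √(2 * log #A) :=
    calc _ ≤ 2 * √(log #A * (r ^ 2 / 2)) :=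
          le_two_sqrt_mul_of_forall_le_add_sq_mul_div (log_natCast_nonneg _) (by positivity)
            fun l hl => expect_sup'_le_log_card_add_div hA _ hl fun a ha =>
              (expect_exp_mul_sum_sign_mul_le l a).trans <| exp_le_exp.2 <| by
                rw [mul_div_assoc]
                gcongr
                exact hr a ha
      _ = r * √(2 * log #A) := by
        rw [show log #A * (r ^ 2 / 2) = (r / 2) ^ 2 * (2 * log #A) by ring,
          sqrt_mul (sq_nonneg _), sqrt_sq (by positivity)]
        ring
  simp_rw [← mul₀_sup' (one_div_nonneg.2 (Nat.cast_nonneg (α := ℝ) n)), ← mul_sum]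
  rw [Fintype.expect_eq_sum_div_card, Fintype.card_fun, Fintype.card_bool, Fintype.card_fin,
    Nat.cast_pow, Nat.cast_ofNat] at hmax
  refine le_of_eq_of_le ?_ (div_le_div_of_nonneg_right hmax (Nat.cast_nonneg n))
  ring

/-- Massart's finite class lemma: if `A ⊆ ℝ^n` is a nonempty finite set with
`max_{a∈A} ‖a‖₂ ≤ r`, then `E_σ[max_{a∈A} (1/n) ∑ i σ_i a_i] ≤ r √(2 log |A|) / n`,
where the `σ_i` are i.i.d. Rademacher variables (expectation written as an average
over all sign vectors). -/
theorem massart_lemma {n : ℕ} (hn : 0 < n)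
    (A : Finset (EuclideanSpace ℝ (Fin n))) (hA : A.Nonempty)
    (r : ℝ) (hr : ∀ a ∈ A, ‖a‖ ≤ r) :
    (1 / 2 ^ n : ℝ) * ∑ σ : Fin n → Bool,
        A.sup' hA (fun a => (1 / n : ℝ) * ∑ i, (if σ i then (1 : ℝ) else -1) * a i)
      ≤ r * Real.sqrt (2 * Real.log A.card) / n :=
  massart_lemma_general A hA r hr
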